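/- arXiv:2102.12715 — 2 statements merged into one kernel-verified Lean document; each statement's English description precedes it below -/
import Mathlib

section
/- Let $P \in \mathbb{S}_+^n$, $\lambda > 0$ with $\lambda I - \Xi^\top P \Xi \succ 0$, and set $\Phi := B R^{-1} B^\top - \frac{1}{\lambda}\Xi\Xi^\top$ where $R \in \mathbb{S}_{++}^m$. Then the matrix $I + P\Phi$ is invertible. -/
/-!
Write `P = Aᵀ A`. By the Weinstein–Aronszajn identity `1 + P Φ` is invertible iff
`1 + A Φ Aᵀ` is, and the latter is `(1 - λ⁻¹ (A Ξ)(A Ξ)ᵀ) + (A B) R⁻¹ (A B)ᵀ`: a positive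
semidefinite matrix added to one that is positive definite, because `λ - (A Ξ)ᵀ (A Ξ)` and
`1 - λ⁻¹ (A Ξ)(A Ξ)ᵀ` are the two Schur complements of the block matrix `[1, A Ξ; (A Ξ)ᵀ, λ]`.
-/

open Matrix
open scoped ComplexOrder

namespace Matrix

theorem isUnit_one_add_mul_comm {m n α : Type*} [Fintype m] [Fintype n] [DecidableEq m]
    [DecidableEq n] [CommRing α] (A : Matrix m n α) (B : Matrix n m α) :
    IsUnit (1 + A * B) ↔ IsUnit (1 + B * A) := by
  rw [isUnit_iff_isUnit_det, isUnit_iff_isUnit_det, det_one_add_mul_comm]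

variable {m k 𝕜 : Type*} [Fintype m] [Fintype k] [DecidableEq m] [DecidableEq k] [RCLike 𝕜]

theorem PosDef.one_sub_inv_smul_mul_conjTranspose {c : ℝ} (hc : 0 < c) {M : Matrix m k 𝕜}
    (h : (c • 1 - Mᴴ * M).PosDef) : (1 - c⁻¹ • (M * Mᴴ)).PosDef := by
  let _ : Invertible (c • (1 : Matrix k k 𝕜)) :=
    ⟨c⁻¹ • 1, by simp [smul_smul, hc.ne'], by simp [smul_smul, hc.ne']⟩
  have hschur : M * (c • (1 : Matrix k k 𝕜))⁻¹ * Mᴴ = c⁻¹ • (M * Mᴴ) := by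
    rw [← invOf_eq_nonsing_inv]
    show M * (c⁻¹ • 1) * Mᴴ = _
    simp
  have hpsd : (1 - c⁻¹ • (M * Mᴴ)).PosSemidef := by
    let _ : Invertible (1 : Matrix m m 𝕜) := invertibleOne
    rw [← hschur, ← PosDef.fromBlocks₂₂ 1 M (D := c • 1) (PosDef.one.smul hc),
      PosDef.fromBlocks₁₁ M _ PosDef.one]
    simpa using h.posSemidef
  refine hpsd.posDef_iff_det_ne_zero.mpr fun hzero => h.det_pos.ne' ?_
  have hdet := det_fromBlocks₂₂ 1 M Mᴴ (c • (1 : Matrix k k 𝕜))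
  rw [det_fromBlocks_one₁₁, invOf_eq_nonsing_inv, hschur] at hdet
  rw [hdet, hzero, mul_zero]

end Matrix

theorem stmt2 {n m k : ℕ} (P : Matrix (Fin n) (Fin n) ℝ) (R : Matrix (Fin m) (Fin m) ℝ)
    (B : Matrix (Fin n) (Fin m) ℝ) (Ξ : Matrix (Fin n) (Fin k) ℝ) (lam : ℝ)
    (hP : P.PosSemidef) (hR : R.PosDef) (hlam : 0 < lam)
    (hpd : (lam • (1 : Matrix (Fin k) (Fin k) ℝ) - Ξᵀ * P * Ξ).PosDef) :
    IsUnit (1 + P * (B * R⁻¹ * Bᵀ - lam⁻¹ • (Ξ * Ξᵀ))) := by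
  obtain ⟨A, rfl⟩ : ∃ A : Matrix (Fin n) (Fin n) ℝ, P = Aᵀ * A := by
    open scoped MatrixOrder in
    obtain ⟨A, hA⟩ := CStarAlgebra.nonneg_iff_eq_star_mul_self.mp hP.nonneg
    exact ⟨A, by rw [hA, star_eq_conjTranspose, conjTranspose_eq_transpose_of_trivial]⟩
  have hAΞ : (lam • 1 - (A * Ξ)ᴴ * (A * Ξ)).PosDef := by
    simpa [conjTranspose_eq_transpose_of_trivial, Matrix.mul_assoc] using hpd
  have hAB : ((A * B) * R⁻¹ * (A * B)ᴴ).PosSemidef :=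
    hR.inv.posSemidef.mul_mul_conjTranspose_same _
  have hsum := (hAΞ.one_sub_inv_smul_mul_conjTranspose hlam).add_posSemidef hAB
  rw [Matrix.mul_assoc, isUnit_one_add_mul_comm]
  convert hsum.isUnit using 1
  simp only [conjTranspose_eq_transpose_of_trivial, transpose_mul, Matrix.mul_sub, Matrix.sub_mul,
    Matrix.mul_smul, Matrix.smul_mul, Matrix.mul_assoc]
  abel
end

section
/- Let $P$ be a solution of the algebraic Riccati equation $P - Q = A^\top P (I + \Phi P)^{-1} A$ where $I + \Phi P$ is invertible, and let $E := (I + \Phi P)^{-1} A$ have Jordan decomposition $E = U_1 D U_1^{-1}$ with $U_1$ invertible. Then with $U_2 := P U_1$, the columns of $\begin{bmatrix} U_1 \\ U_2 \end{bmatrix}$ satisfy $F \begin{bmatrix} U_1 \\ U_2 \end{bmatrix} = G \begin{bmatrix} U_1 \\ U_2 \end{bmatrix} D$, where $F = \begin{bmatrix} A & 0 \\ -Q & I \end{bmatrix}$ and $G = \begin{bmatrix} I & \Phi \\ 0 & A^\top \end{bmatrix}$. In particular $P = U_2 U_1^{-1}$. -/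
open Matrix

/-!
With the closed-loop matrix `E = (1 + Φ P)⁻¹ A`, the Riccati equation reads `A = (1 + Φ P) E` and
`P - Q = Aᵀ P E`. Multiplying both on the right by `U₁` and using `E U₁ = U₁ D` gives exactly the
two block rows of `F [U₁; P U₁] = G [U₁; P U₁] D`, i.e. `[U₁; P U₁]` spans a deflating subspace of
the pencil `F - λ G`.
-/

theorem fromBlocks_mul_fromRows_eq_of_riccati {m n R : Type*} [Fintype m] [Fintype n]
    [DecidableEq n] [Ring R] {A Q Φ P E : Matrix n n R} {V : Matrix n m R} {D : Matrix m m R}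
    (hA : A = (1 + Φ * P) * E) (hPQ : P - Q = Aᵀ * P * E) (hEV : E * V = V * D) :
    -- without the ascriptions `*` elaborates to `CStarMatrix`'s multiplication
    (fromBlocks A 0 (-Q) 1 : Matrix (n ⊕ n) (n ⊕ n) R) * fromRows V (P * V) =
      (fromBlocks 1 Φ 0 Aᵀ : Matrix (n ⊕ n) (n ⊕ n) R) * (fromRows V (P * V) * D) := by
  have htop : A * V = V * D + Φ * (P * V * D) := by
    rw [hA, Matrix.mul_assoc, hEV]
    simp only [Matrix.add_mul, Matrix.one_mul, Matrix.mul_assoc]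
  have hbot : -Q * V + P * V = Aᵀ * (P * V * D) := by
    rw [Matrix.neg_mul, neg_add_eq_sub, ← Matrix.sub_mul, hPQ]
    simp only [Matrix.mul_assoc, hEV]
  rw [fromRows_mul, fromBlocks_mul_fromRows, fromBlocks_mul_fromRows]
  simp only [Matrix.zero_mul, add_zero, Matrix.one_mul, zero_add, htop, hbot]

theorem stmt6_general {n : ℕ} (A Q Φ P : Matrix (Fin n) (Fin n) ℝ)
    (U1 D : Matrix (Fin n) (Fin n) ℂ)
    (hinv : IsUnit ((1 : Matrix (Fin n) (Fin n) ℝ) + Φ * P))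
    (hare : P - Q = Aᵀ * P * (1 + Φ * P)⁻¹ * A)
    (hU1 : IsUnit U1)
    (hE : (((1 + Φ * P)⁻¹ * A).map Complex.ofReal) = U1 * D * U1⁻¹) :
    Matrix.fromBlocks (A.map Complex.ofReal) 0 (-(Q.map Complex.ofReal)) 1 *
        Matrix.fromRows U1 (P.map Complex.ofReal * U1) =
      Matrix.fromBlocks 1 (Φ.map Complex.ofReal) 0 ((A.map Complex.ofReal)ᵀ) *
        (Matrix.fromRows U1 (P.map Complex.ofReal * U1) * D) ∧
    P.map Complex.ofReal = (P.map Complex.ofReal * U1) * U1⁻¹ := by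
  have hdet := (isUnit_iff_isUnit_det U1).mp hU1
  have hA : A = (1 + Φ * P) * ((1 + Φ * P)⁻¹ * A) :=
    (mul_nonsing_inv_cancel_left _ A ((isUnit_iff_isUnit_det _).mp hinv)).symm
  have hPQ : P - Q = Aᵀ * P * ((1 + Φ * P)⁻¹ * A) := by rw [hare, Matrix.mul_assoc]
  set E := (1 + Φ * P)⁻¹ * A
  clear_value E
  have hEU1 : E.map Complex.ofReal * U1 = U1 * D := by
    rw [hE, nonsing_inv_mul_cancel_right _ _ hdet]
  refine ⟨fromBlocks_mul_fromRows_eq_of_riccati ?_ ?_ hEU1,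
    (mul_nonsing_inv_cancel_right _ _ hdet).symm⟩
  · have := congrArg Complex.ofRealHom.mapMatrix hA
    simp only [map_mul, map_add, map_one, RingHom.mapMatrix_apply] at this
    exact this
  · have := congrArg Complex.ofRealHom.mapMatrix hPQ
    simp only [map_mul, map_sub, RingHom.mapMatrix_apply] at this
    exact this

theorem stmt6 {n : ℕ} (A Q Φ P : Matrix (Fin n) (Fin n) ℝ)
    (hQ : Q.IsHermitian) (hΦ : Φ.IsHermitian)
    (U1 D : Matrix (Fin n) (Fin n) ℂ)
    (hinv : IsUnit ((1 : Matrix (Fin n) (Fin n) ℝ) + Φ * P))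
    (hare : P - Q = Aᵀ * P * (1 + Φ * P)⁻¹ * A)
    (hU1 : IsUnit U1)
    (hE : (((1 + Φ * P)⁻¹ * A).map Complex.ofReal) = U1 * D * U1⁻¹) :
    Matrix.fromBlocks (A.map Complex.ofReal) 0 (-(Q.map Complex.ofReal)) 1 *
        Matrix.fromRows U1 (P.map Complex.ofReal * U1) =
      Matrix.fromBlocks 1 (Φ.map Complex.ofReal) 0 ((A.map Complex.ofReal)ᵀ) *
        (Matrix.fromRows U1 (P.map Complex.ofReal * U1) * D) ∧
    P.map Complex.ofReal = (P.map Complex.ofReal * U1) * U1⁻¹ :=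
  stmt6_general A Q Φ P U1 D hinv hare hU1 hE
end
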